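/- Let Λ = Bℤ^d (B ∈ GL_d(ℝ)) be a full-rank lattice in ℝ^d, let Ω ⊆ ℝ^d be a bounded measurable set, write V = PW_Ω, let ℓ be a positive integer, and let F = {f_1, …, f_m} ⊆ L²(ℝ^d). Let C_ℓ(ℝ^d) denote the class of closed subspaces of L²(ℝ^d) of the form S_Λ(Ψ) with Ψ ⊆ L²(ℝ^d) of cardinality at most ℓ, and let C_ℓ(Ω) be the subclass of those contained in V. Then: (a) {A ∈ C_ℓ(ℝ^d) : E(P_V F, A) = min_{S ∈ C_ℓ(ℝ^d)} E(P_V F, S)} ∩ C_ℓ(Ω) equals {A ∈ C_ℓ(Ω) : E(P_V F, A) = min_{S ∈ C_ℓ(Ω)} E(P_V F, S)}; and (b) the latter set equals {A ∈ C_ℓ(Ω) : E(F, A) = min_{S ∈ C_ℓ(Ω)} E(F, S)}. -/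

import Mathlib

open MeasureTheory

noncomputable section

open scoped Classical in
/-- Orthogonal projection onto a submodule (zero if no orthogonal projection exists). -/
def proj {𝕜 H : Type*} [RCLike 𝕜] [NormedAddCommGroup H] [InnerProductSpace 𝕜 H]
    (V : Submodule 𝕜 H) (x : H) : H :=
  if h : Submodule.HasOrthogonalProjection V then (V.orthogonalProjectionOnto x : H) else 0

/-- The approximation error `E(F, S) = ∑ i, ‖f i - P_S (f i)‖²`. -/
def err {𝕜 H : Type*} [RCLike 𝕜] [NormedAddCommGroup H] [InnerProductSpace 𝕜 H]
    {m : ℕ} (F : Fin m → H) (S : Submodule 𝕜 H) : ℝ :=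
  ∑ i, ‖F i - proj S (F i)‖ ^ 2

abbrev Rd (d : ℕ) := EuclideanSpace ℝ (Fin d)
abbrev L2 (d : ℕ) := Lp ℂ 2 (volume : Measure (Rd d))

/-- The integer lattice `ℤ^d` inside `ℝ^d`. -/
def zdLattice (d : ℕ) : Set (Rd d) := {x | ∀ i, ∃ n : ℤ, x i = (n : ℝ)}

/-- The `Λ`-shift-invariant space generated by `Φ`: the closed span of the translates
`t_λ φ`, `λ ∈ Λ`, `φ ∈ Φ`, where `t_λ φ (x) = φ (x - λ)` a.e. -/
def SIS {d : ℕ} (Λ : Set (Rd d)) (Φ : Set (L2 d)) : Submodule ℂ (L2 d) :=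
  (Submodule.span ℂ {h : L2 d |
    ∃ l ∈ Λ, ∃ φ ∈ Φ, (h : Rd d → ℂ) =ᵐ[volume] fun x => φ (x - l)}).topologicalClosure

/-- The Paley–Wiener space of `Ω`, relative to the Plancherel transform `T`:
those `f ∈ L²(ℝ^d)` with `T f = 0` a.e. outside `Ω`. -/
def PW {d : ℕ} (T : L2 d ≃ₗᵢ[ℂ] L2 d) (Ω : Set (Rd d)) : Set (L2 d) :=
  {f | ∀ᵐ ξ ∂(volume : Measure (Rd d)), ξ ∉ Ω → T f ξ = 0}


/-- The class `C_ℓ(ℝ^d)` of `Λ`-shift-invariant subspaces of length at most `ℓ`. -/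
def Cl {d : ℕ} (Λ : Set (Rd d)) (ℓ : ℕ) : Set (Submodule ℂ (L2 d)) :=
  {S | ∃ Ψ : Finset (L2 d), Ψ.card ≤ ℓ ∧ S = SIS Λ (Ψ : Set (L2 d))}

/-- The class `C_ℓ(Ω)` of members of `C_ℓ(ℝ^d)` contained in `V`. -/
def ClOmega {d : ℕ} (Λ : Set (Rd d)) (ℓ : ℕ) (V : Submodule ℂ (L2 d)) :
    Set (Submodule ℂ (L2 d)) :=
  {S ∈ Cl Λ ℓ | (S : Set (L2 d)) ⊆ (V : Set (L2 d))}

open scoped RealInnerProductSpace FourierTransform ENNReal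

namespace ArgminAux

variable {d : ℕ}

/-- Translation by `l` as a linear isometry of `L²`. -/
noncomputable def tau (l : Rd d) : L2 d →ₗᵢ[ℂ] L2 d :=
  Lp.compMeasurePreservingₗᵢ ℂ (· - l) (measurePreserving_sub_right volume l)

lemma tau_coeFn (l : Rd d) (f : L2 d) :
    ⇑(tau l f) =ᵐ[volume] fun x => f (x - l) :=
  Lp.coeFn_compMeasurePreserving f _

lemma tau_tau (l : Rd d) (f : L2 d) : tau l (tau (-l) f) = f := by
  apply Lp.ext
  have h2 : (⇑(tau (-l) f)) ∘ (fun x : Rd d => x - l) =ᵐ[volume]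
      (fun x : Rd d => f (x - -l)) ∘ (fun x : Rd d => x - l) :=
    (measurePreserving_sub_right (volume : Measure (Rd d)) l).quasiMeasurePreserving.ae_eq_comp
      (tau_coeFn (-l) f)
  refine (tau_coeFn l (tau (-l) f)).trans (h2.trans ?_)
  have h3 : ((fun x : Rd d => f (x - -l)) ∘ (fun x : Rd d => x - l)) = ⇑f := by
    funext x
    simp only [Function.comp_apply, sub_neg_eq_add, sub_add_cancel]
  rw [h3]

lemma tau_orthProj {V : Submodule ℂ (L2 d)} [Submodule.HasOrthogonalProjection V]
    (hInv : ∀ (l : Rd d) (f : L2 d), f ∈ V → tau l f ∈ V) (l : Rd d) (x : L2 d) :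
    (Submodule.orthogonalProjectionOnto V (tau l x) : L2 d) = tau l (Submodule.orthogonalProjectionOnto V x) := by
  refine Submodule.eq_starProjection_of_mem_orthogonal (hInv l _ (SetLike.coe_mem _)) ?_
  rw [Submodule.mem_orthogonal']
  intro u hu
  have hsub : tau l x - tau l (Submodule.orthogonalProjectionOnto V x)
      = tau l (x - Submodule.orthogonalProjectionOnto V x) := by rw [map_sub]
  rw [hsub]
  have hu' : u = tau l (tau (-l) u) := (tau_tau l u).symm
  rw [hu', LinearIsometry.inner_map_map]
  exact Submodule.starProjection_inner_eq_zero x _ (hInv (-l) u hu)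

/-- The unimodular character `ξ ↦ e^{-2πi⟨l,ξ⟩}`. -/
noncomputable def chr (l ξ : Rd d) : ℂ := (𝐞 (⟪-l, ξ⟫) : Circle)

lemma chr_norm (l ξ : Rd d) : ‖chr l ξ‖ = 1 := by
  rw [chr, Circle.norm_coe]

lemma chr_continuous (l : Rd d) : Continuous (chr l) := by
  exact continuous_subtype_val.comp
    (Real.continuous_fourierChar.comp (continuous_const.inner continuous_id))

lemma memℒp_chr_mul (l : Rd d) (g : L2 d) :
    MemLp (fun ξ => chr l ξ * g ξ) 2 volume := by
  refine MemLp.of_le (Lp.memLp g)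
    (((chr_continuous l).aestronglyMeasurable).mul (Lp.aestronglyMeasurable g)) ?_
  filter_upwards with ξ
  rw [norm_mul, chr_norm, one_mul]

/-- Multiplication by the character `chr l` on `L²`. -/
noncomputable def mulChar (l : Rd d) (g : L2 d) : L2 d := (memℒp_chr_mul l g).toLp _

lemma mulChar_coeFn (l : Rd d) (g : L2 d) :
    ⇑(mulChar l g) =ᵐ[volume] fun ξ => chr l ξ * g ξ :=
  MemLp.coeFn_toLp _

lemma mulChar_dist (l : Rd d) (g g' : L2 d) :
    dist (mulChar l g) (mulChar l g') = dist g g' := by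
  rw [Lp.dist_def, Lp.dist_def]
  congr 1
  apply eLpNorm_congr_norm_ae
  filter_upwards [mulChar_coeFn l g, mulChar_coeFn l g'] with ξ h1 h2
  simp only [Pi.sub_apply, h1, h2, ← mul_sub, norm_mul, chr_norm, one_mul]

lemma mulChar_continuous (l : Rd d) : Continuous (mulChar l) :=
  (Isometry.of_dist_eq (mulChar_dist l)).continuous

lemma fourierIntegral_congr_ae {h h' : Rd d → ℂ} (hh : h =ᵐ[volume] h') :
    VectorFourier.fourierIntegral Real.fourierChar volume (innerₗ (Rd d)) h = VectorFourier.fourierIntegral Real.fourierChar volume (innerₗ (Rd d)) h' := by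
  funext w
  simp only [VectorFourier.fourierIntegral]
  exact integral_congr_ae (hh.mono fun x hx => by simp only [hx])

lemma T_tau_toLp (T : L2 d ≃ₗᵢ[ℂ] L2 d)
    (hT : ∀ f : L2 d, Integrable (⇑f) volume →
      ⇑(T f) =ᵐ[volume] VectorFourier.fourierIntegral Real.fourierChar volume (innerₗ (Rd d)) (⇑f))
    (l : Rd d) {g : Rd d → ℂ} (hg_cont : Continuous g) (hg_supp : HasCompactSupport g)
    (hg2 : MemLp g 2 volume) :
    T (tau l (hg2.toLp g)) = mulChar l (T (hg2.toLp g)) := by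
  have hgint : Integrable g volume := hg_cont.integrable_of_hasCompactSupport hg_supp
  set u := hg2.toLp g with hu_def
  have hu : ⇑u =ᵐ[volume] g := hg2.coeFn_toLp
  have htau_u : ⇑(tau l u) =ᵐ[volume] fun x => g (x - l) := by
    refine (tau_coeFn l u).trans ?_
    exact (measurePreserving_sub_right (volume : Measure (Rd d)) l).quasiMeasurePreserving.ae_eq_comp hu
  have hint_gl : Integrable (fun x : Rd d => g (x - l)) volume := by
    have := ((measurePreserving_sub_right (volume : Measure (Rd d)) l).integrable_comp
      hgint.aestronglyMeasurable).mpr hgint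
    exact this
  have hint_tau : Integrable (⇑(tau l u)) volume := hint_gl.congr htau_u.symm
  have h1 : ⇑(T (tau l u)) =ᵐ[volume] VectorFourier.fourierIntegral Real.fourierChar volume (innerₗ (Rd d)) (⇑(tau l u)) := hT _ hint_tau
  have h2 : VectorFourier.fourierIntegral Real.fourierChar volume (innerₗ (Rd d)) (⇑(tau l u)) = VectorFourier.fourierIntegral Real.fourierChar volume (innerₗ (Rd d)) (fun x => g (x - l)) :=
    fourierIntegral_congr_ae htau_u
  have h3 : VectorFourier.fourierIntegral Real.fourierChar volume (innerₗ (Rd d)) (fun x : Rd d => g (x - l))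
      = fun w => chr l w * VectorFourier.fourierIntegral Real.fourierChar volume (innerₗ (Rd d)) g w := by
    have hcomp : (fun x : Rd d => g (x - l)) = g ∘ (fun v => v + (-l)) := by
      funext x; simp [Function.comp, sub_eq_add_neg]
    rw [hcomp]
    have h := VectorFourier.fourierIntegral_comp_add_right 𝐞
      (volume : Measure (Rd d)) (innerₗ (Rd d)) g (-l)
    funext w
    have hw := congrFun h w
    simpa [chr, Circle.smul_def] using hw
  have h4 : ⇑(T u) =ᵐ[volume] VectorFourier.fourierIntegral Real.fourierChar volume (innerₗ (Rd d)) g := by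
    refine (hT u (hgint.congr hu.symm)).trans ?_
    rw [fourierIntegral_congr_ae hu]
  have h5 : ⇑(mulChar l (T u)) =ᵐ[volume] fun w => chr l w * VectorFourier.fourierIntegral Real.fourierChar volume (innerₗ (Rd d)) g w := by
    refine (mulChar_coeFn l (T u)).trans ?_
    filter_upwards [h4] with w hw
    rw [hw]
  apply Lp.ext
  refine h1.trans ?_
  rw [h2, h3]
  exact h5.symm

lemma T_tau (T : L2 d ≃ₗᵢ[ℂ] L2 d)
    (hT : ∀ f : L2 d, Integrable (⇑f) volume →
      ⇑(T f) =ᵐ[volume] VectorFourier.fourierIntegral Real.fourierChar volume (innerₗ (Rd d)) (⇑f))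
    (l : Rd d) (f : L2 d) :
    T (tau l f) = mulChar l (T f) := by
  set s : Set (L2 d) := {f : L2 d | T (tau l f) = mulChar l (T f)} with hs_def
  have hcl : IsClosed s :=
    isClosed_eq (T.continuous.comp (tau l).continuous)
      ((mulChar_continuous l).comp T.continuous)
  have hdense : Dense s := by
    rw [Metric.dense_iff]
    intro f r hr
    obtain ⟨g, hg_supp, hg_near, hg_cont, hg2⟩ :=
      (Lp.memLp f).exists_hasCompactSupport_eLpNorm_sub_le (p := 2)
        (by norm_num) (ε := ENNReal.ofReal (r / 2))
        (by simp [ENNReal.ofReal_eq_zero]; linarith)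
    refine ⟨hg2.toLp g, ?_, T_tau_toLp T hT l hg_cont hg_supp hg2⟩
    rw [Metric.mem_ball, dist_comm, Lp.dist_def]
    have hlt : eLpNorm (⇑f - ⇑(hg2.toLp g)) 2 volume ≤ ENNReal.ofReal (r / 2) := by
      refine le_trans (le_of_eq (eLpNorm_congr_ae ?_)) hg_near
      filter_upwards [hg2.coeFn_toLp] with x hx
      simp [hx]
    calc (eLpNorm (⇑f - ⇑(hg2.toLp g)) 2 volume).toReal
        ≤ r / 2 := ENNReal.toReal_le_of_le_ofReal (by linarith) hlt
      _ < r := by linarith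
  have : s = Set.univ := hcl.closure_eq ▸ hdense.closure_eq
  exact (Set.eq_univ_iff_forall.mp this f)

end ArgminAux


namespace ArgminAux

section ProjGeneral

variable {𝕜 H : Type*} [RCLike 𝕜] [NormedAddCommGroup H] [InnerProductSpace 𝕜 H]

lemma proj_eq (V : Submodule 𝕜 H) [h : Submodule.HasOrthogonalProjection V] (x : H) :
    proj V x = Submodule.orthogonalProjectionOnto V x := by
  unfold proj
  rw [dif_pos h]

lemma proj_mem (V : Submodule 𝕜 H) [Submodule.HasOrthogonalProjection V] (x : H) : proj V x ∈ V := by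
  rw [proj_eq]; exact SetLike.coe_mem _

lemma proj_of_mem (V : Submodule 𝕜 H) [Submodule.HasOrthogonalProjection V] {x : H} (hx : x ∈ V) :
    proj V x = x := by
  rw [proj_eq]; exact Submodule.starProjection_eq_self_iff.mpr hx

lemma proj_sub (V : Submodule 𝕜 H) [Submodule.HasOrthogonalProjection V] (x y : H) :
    proj V x - proj V y = proj V (x - y) := by
  simp only [proj_eq]
  rw [← Submodule.coe_sub, ← map_sub]

lemma sub_proj_inner (V : Submodule 𝕜 H) [Submodule.HasOrthogonalProjection V] (x : H) {w : H}
    (hw : w ∈ V) : (inner 𝕜 (x - proj V x) w : 𝕜) = 0 := by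
  rw [proj_eq]; exact Submodule.starProjection_inner_eq_zero x w hw

lemma norm_sub_proj_le (V : Submodule 𝕜 H) [Submodule.HasOrthogonalProjection V] (u : H) {w : H}
    (hw : w ∈ V) : ‖u - proj V u‖ ≤ ‖u - w‖ := by
  have hmem : proj V u - w ∈ V := Submodule.sub_mem V (proj_mem V u) hw
  have hinner := sub_proj_inner V u hmem
  have hpyth := norm_add_sq_eq_norm_sq_add_norm_sq_of_inner_eq_zero _ _ hinner
  have hdecomp : (u - proj V u) + (proj V u - w) = u - w := by abel
  rw [hdecomp] at hpyth
  nlinarith [norm_nonneg (u - w), norm_nonneg (u - proj V u),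
    mul_self_nonneg ‖proj V u - w‖]

lemma norm_proj_le (V : Submodule 𝕜 H) [Submodule.HasOrthogonalProjection V] (x : H) :
    ‖proj V x‖ ≤ ‖x‖ := by
  have hinner : (inner 𝕜 (x - proj V x) (proj V x) : 𝕜) = 0 :=
    sub_proj_inner V x (proj_mem V x)
  have hpyth := norm_add_sq_eq_norm_sq_add_norm_sq_of_inner_eq_zero _ _ hinner
  have hx : (x - proj V x) + proj V x = x := by abel
  rw [hx] at hpyth
  nlinarith [norm_nonneg x, norm_nonneg (proj V x), mul_self_nonneg ‖x - proj V x‖]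

lemma err_nonneg {m : ℕ} (F : Fin m → H) (S : Submodule 𝕜 H) : 0 ≤ err F S :=
  Finset.sum_nonneg fun _ _ => sq_nonneg _

lemma err_le_of_exists {m : ℕ} (G : Fin m → H) (S S' : Submodule 𝕜 H)
    [Submodule.HasOrthogonalProjection S] [Submodule.HasOrthogonalProjection S']
    (h : ∀ i, ∃ w ∈ S', ‖G i - w‖ ≤ ‖G i - proj S (G i)‖) :
    err G S' ≤ err G S := by
  unfold err
  refine Finset.sum_le_sum fun i _ => ?_
  obtain ⟨w, hw, hle⟩ := h i
  exact pow_le_pow_left₀ (norm_nonneg _) ((norm_sub_proj_le S' (G i) hw).trans hle) 2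

lemma err_split {m : ℕ} (F : Fin m → H) (V A : Submodule 𝕜 H)
    [Submodule.HasOrthogonalProjection V] [Submodule.HasOrthogonalProjection A] (hAV : A ≤ V) :
    err F A = err (fun i => proj V (F i)) A + ∑ i, ‖F i - proj V (F i)‖ ^ 2 := by
  unfold err
  rw [← Finset.sum_add_distrib]
  refine Finset.sum_congr rfl fun i _ => ?_
  set G := proj V (F i) with hG
  have hFG : F i - G ∈ Vᗮ := by
    rw [hG, proj_eq]
    exact Submodule.sub_starProjection_mem_orthogonal _
  have hprojsub : proj A (F i) = proj A G := by
    simp only [proj_eq]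
    have h0 : Submodule.orthogonalProjectionOnto A (F i - G) = 0 :=
      Submodule.orthogonalProjectionOnto_apply_of_mem_orthogonal
        (Submodule.orthogonal_le hAV hFG)
    have hmap := map_sub (Submodule.orthogonalProjectionOnto A) (F i) G
    rw [h0] at hmap
    have h2 := sub_eq_zero.mp hmap.symm
    rw [h2]
  have hsplit : F i - proj A (F i) = (F i - G) + (G - proj A G) := by
    rw [hprojsub]; abel
  have hGmem : G - proj A G ∈ V :=
    Submodule.sub_mem V (proj_mem V (F i)) (hAV (proj_mem A G))
  have hinner : (inner 𝕜 (F i - G) (G - proj A G) : 𝕜) = 0 :=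
    (Submodule.mem_orthogonal' V (F i - G)).mp hFG _ hGmem
  rw [hsplit]
  have hpyth := norm_add_sq_eq_norm_sq_add_norm_sq_of_inner_eq_zero _ _ hinner
  simp only [pow_two]
  linarith

end ProjGeneral

lemma sInf_image_add_const {α : Type*} (s : Set α) (hs : s.Nonempty) (f : α → ℝ)
    (hbdd : BddBelow (f '' s)) (c : ℝ) :
    sInf ((fun x => f x + c) '' s) = sInf (f '' s) + c := by
  have himg : (fun x => f x + c) '' s = (fun y => y + c) '' (f '' s) := by
    rw [Set.image_image]
  rw [himg]
  exact (Monotone.map_csInf_of_continuousAt ((continuous_add_right c).continuousAt)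
    (fun _ _ hab => add_le_add_left hab c) (hs.image f) hbdd).symm

variable {d : ℕ}

lemma hasProj_of_isClosed {A : Submodule ℂ (L2 d)} (hA : IsClosed (A : Set (L2 d))) :
    Submodule.HasOrthogonalProjection A := by
  haveI : CompleteSpace A := hA.completeSpace_coe
  infer_instance

lemma isClosed_of_mem_Cl {Λ : Set (Rd d)} {ℓ : ℕ} {A : Submodule ℂ (L2 d)} (hA : A ∈ Cl Λ ℓ) :
    IsClosed (A : Set (L2 d)) := by
  obtain ⟨Ψ, -, rfl⟩ := hA
  exact Submodule.isClosed_topologicalClosure _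

lemma tau_mem_V (T : L2 d ≃ₗᵢ[ℂ] L2 d)
    (hT : ∀ f : L2 d, Integrable (⇑f) volume →
      ⇑(T f) =ᵐ[volume] VectorFourier.fourierIntegral Real.fourierChar volume (innerₗ (Rd d)) (⇑f))
    (Ω : Set (Rd d)) (V : Submodule ℂ (L2 d)) (hV : (V : Set (L2 d)) = PW T Ω)
    (l : Rd d) {f : L2 d} (hf : f ∈ V) : tau l f ∈ V := by
  have h1 : f ∈ PW T Ω := by rw [← hV]; exact hf
  show tau l f ∈ (V : Set (L2 d))
  rw [hV]
  show ∀ᵐ ξ ∂(volume : Measure (Rd d)), ξ ∉ Ω → T (tau l f) ξ = 0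
  rw [T_tau T hT l f]
  have h2 : ∀ᵐ ξ ∂(volume : Measure (Rd d)), ξ ∉ Ω → T f ξ = 0 := h1
  filter_upwards [mulChar_coeFn l (T f), h2] with ξ h3 h4 hξ
  rw [h3, h4 hξ, mul_zero]

set_option maxHeartbeats 2000000 in
lemma exists_min_in_ClOmega (T : L2 d ≃ₗᵢ[ℂ] L2 d)
    (hT : ∀ f : L2 d, Integrable (⇑f) volume →
      ⇑(T f) =ᵐ[volume] VectorFourier.fourierIntegral Real.fourierChar volume (innerₗ (Rd d)) (⇑f))
    (Ω : Set (Rd d)) (V : Submodule ℂ (L2 d)) (hVclosed : IsClosed (V : Set (L2 d)))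
    (hV : (V : Set (L2 d)) = PW T Ω)
    {Λ : Set (Rd d)} {ℓ : ℕ} {m : ℕ} (F : Fin m → L2 d)
    {S : Submodule ℂ (L2 d)} (hS : S ∈ Cl Λ ℓ) :
    ∃ S' ∈ ClOmega Λ ℓ V, err (fun i => proj V (F i)) S' ≤ err (fun i => proj V (F i)) S := by
  classical
  haveI hVproj : Submodule.HasOrthogonalProjection V := hasProj_of_isClosed hVclosed
  have hInv : ∀ (l : Rd d) (f : L2 d), f ∈ V → tau l f ∈ V :=
    fun l f hf => tau_mem_V T hT Ω V hV l hf
  obtain ⟨Ψ, hcard, rfl⟩ := hS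
  set Ψ' : Finset (L2 d) := Ψ.image (fun ψ => proj V ψ) with hΨ'
  haveI hSproj : Submodule.HasOrthogonalProjection (SIS Λ (Ψ : Set (L2 d))) :=
    hasProj_of_isClosed (Submodule.isClosed_topologicalClosure _)
  haveI hS'proj : Submodule.HasOrthogonalProjection (SIS Λ (Ψ' : Set (L2 d))) :=
    hasProj_of_isClosed (Submodule.isClosed_topologicalClosure _)
  set Pc : L2 d →L[ℂ] L2 d := V.subtypeL.comp (Submodule.orthogonalProjectionOnto V) with hPc
  have hPc_apply : ∀ x, Pc x = proj V x := fun x => (proj_eq V x).symm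
  -- the projection maps `SIS Λ Ψ` into `SIS Λ Ψ'`
  have hcomap_closed :
      IsClosed ((Submodule.comap (Pc : L2 d →ₗ[ℂ] L2 d) (SIS Λ (Ψ' : Set (L2 d)))) :
        Set (L2 d)) := by
    have hpre : ((Submodule.comap (Pc : L2 d →ₗ[ℂ] L2 d) (SIS Λ (Ψ' : Set (L2 d)))) :
        Set (L2 d)) = ⇑Pc ⁻¹' ((SIS Λ (Ψ' : Set (L2 d))) : Set (L2 d)) :=
      Submodule.comap_coe _ _
    rw [hpre]
    exact (Submodule.isClosed_topologicalClosure _).preimage Pc.continuous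
  have hmapS : ∀ x ∈ SIS Λ (Ψ : Set (L2 d)), proj V x ∈ SIS Λ (Ψ' : Set (L2 d)) := by
    have hle : SIS Λ (Ψ : Set (L2 d)) ≤
        Submodule.comap (Pc : L2 d →ₗ[ℂ] L2 d) (SIS Λ (Ψ' : Set (L2 d))) := by
      refine Submodule.topologicalClosure_minimal _ ?_ hcomap_closed
      rw [Submodule.span_le]
      rintro h ⟨l, hl, φ, hφ, heq⟩
      have hheq : h = tau l φ := Lp.ext (heq.trans (tau_coeFn l φ).symm)
      show Pc h ∈ SIS Λ (Ψ' : Set (L2 d))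
      have hPc_tau : Pc h = tau l (proj V φ) := by
        have e1 : Pc h = (Submodule.orthogonalProjectionOnto V (tau l φ) : L2 d) := by rw [hheq]; rfl
        rw [e1, tau_orthProj hInv l φ, ← proj_eq]
      rw [hPc_tau]
      apply Submodule.le_topologicalClosure
      apply Submodule.subset_span
      refine ⟨l, hl, proj V φ, ?_, tau_coeFn l (proj V φ)⟩
      rw [hΨ']
      exact Finset.mem_coe.mpr (Finset.mem_image_of_mem _ hφ)
    intro x hx
    have hmem := hle hx
    rw [Submodule.mem_comap] at hmem
    rw [← hPc_apply]
    exact hmem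
  -- `SIS Λ Ψ'` is contained in `V`
  have hS'le : SIS Λ (Ψ' : Set (L2 d)) ≤ V := by
    refine Submodule.topologicalClosure_minimal _ ?_ hVclosed
    rw [Submodule.span_le]
    rintro h ⟨l, hl, φ, hφ, heq⟩
    have hφV : φ ∈ V := by
      rw [hΨ'] at hφ
      obtain ⟨ψ, -, rfl⟩ := Finset.mem_image.mp (Finset.mem_coe.mp hφ)
      exact proj_mem V ψ
    have hheq : h = tau l φ := Lp.ext (heq.trans (tau_coeFn l φ).symm)
    rw [hheq]
    exact hInv l φ hφV
  refine ⟨SIS Λ (Ψ' : Set (L2 d)),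
    ⟨⟨Ψ', by rw [hΨ']; exact (Finset.card_image_le).trans hcard, rfl⟩,
      fun x hx => hS'le hx⟩, ?_⟩
  refine err_le_of_exists _ _ _ fun i => ?_
  set Gi := proj V (F i) with hGi
  set s := proj (SIS Λ (Ψ : Set (L2 d))) Gi with hs
  refine ⟨proj V s, hmapS s (proj_mem _ _), ?_⟩
  have h1 : Gi - proj V s = proj V (Gi - s) := by
    rw [← proj_sub, hGi, proj_of_mem V (proj_mem V (F i))]
  calc ‖Gi - proj V s‖ = ‖proj V (Gi - s)‖ := by rw [h1]
    _ ≤ ‖Gi - s‖ := norm_proj_le V _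

end ArgminAux


/-- The minimizers over `C_ℓ(ℝ^d)` of the error of the projected data that lie in `C_ℓ(Ω)`
are exactly the minimizers over `C_ℓ(Ω)` of the error of the projected data, which in turn
are exactly the minimizers over `C_ℓ(Ω)` of the error of the original data.  Here
`V = PW_Ω` and `T` is the Plancherel transform of `L²(ℝ^d)`. -/
theorem argmin_identities {d m : ℕ}
    (B : (Rd d) ≃ₗ[ℝ] (Rd d)) (Λ : Set (Rd d)) (hΛ : Λ = ⇑B '' zdLattice d)
    (T : L2 d ≃ₗᵢ[ℂ] L2 d)
    (hT : ∀ f : L2 d, Integrable (⇑f) volume →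
      ⇑(T f) =ᵐ[volume] VectorFourier.fourierIntegral Real.fourierChar volume (innerₗ (Rd d)) (⇑f))
    (Ω : Set (Rd d)) (hΩb : Bornology.IsBounded Ω) (hΩm : MeasurableSet Ω)
    (V : Submodule ℂ (L2 d)) (hVclosed : IsClosed (V : Set (L2 d)))
    (hV : (V : Set (L2 d)) = PW T Ω)
    (ℓ : ℕ) (hℓ : 0 < ℓ) (F : Fin m → L2 d) :
    {A ∈ Cl Λ ℓ | err (fun i => proj V (F i)) A =
        sInf (err (fun i => proj V (F i)) '' Cl Λ ℓ)} ∩ ClOmega Λ ℓ V =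
      {A ∈ ClOmega Λ ℓ V | err (fun i => proj V (F i)) A =
        sInf (err (fun i => proj V (F i)) '' ClOmega Λ ℓ V)} ∧
    {A ∈ ClOmega Λ ℓ V | err (fun i => proj V (F i)) A =
        sInf (err (fun i => proj V (F i)) '' ClOmega Λ ℓ V)} =
      {A ∈ ClOmega Λ ℓ V | err F A = sInf (err F '' ClOmega Λ ℓ V)} := by
  classical
  haveI hVproj : Submodule.HasOrthogonalProjection V := ArgminAux.hasProj_of_isClosed hVclosed
  set G : Fin m → L2 d := fun i => proj V (F i) with hG_def
  -- the trivial shift-invariant space witnesses nonemptiness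
  have hbot : SIS Λ ((∅ : Finset (L2 d)) : Set (L2 d)) ∈ ClOmega Λ ℓ V := by
    refine ⟨⟨∅, by simp, rfl⟩, ?_⟩
    intro x hx
    have hle : SIS Λ ((∅ : Finset (L2 d)) : Set (L2 d)) ≤ V := by
      refine Submodule.topologicalClosure_minimal _ ?_ hVclosed
      rw [Submodule.span_le]
      rintro h ⟨l, hl, φ, hφ, -⟩
      simp at hφ
    exact hle hx
  have hClO_ne : (ClOmega Λ ℓ V).Nonempty := ⟨_, hbot⟩
  have hCl_ne : (Cl Λ ℓ).Nonempty := ⟨_, hbot.1⟩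
  have hsub : ClOmega Λ ℓ V ⊆ Cl Λ ℓ := fun A hA => hA.1
  have hbdd : ∀ (F' : Fin m → L2 d) (X : Set (Submodule ℂ (L2 d))), BddBelow (err F' '' X) := by
    rintro F' X
    refine ⟨0, ?_⟩
    rintro y ⟨A, -, rfl⟩
    exact ArgminAux.err_nonneg F' A
  have hinf_eq : sInf (err G '' Cl Λ ℓ) = sInf (err G '' ClOmega Λ ℓ V) := by
    apply le_antisymm
    · exact csInf_le_csInf (hbdd G _) (hClO_ne.image _) (Set.image_mono hsub)
    · refine le_csInf (hCl_ne.image _) ?_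
      rintro b ⟨S, hS, rfl⟩
      obtain ⟨S', hS', hle⟩ := ArgminAux.exists_min_in_ClOmega T hT Ω V hVclosed hV F hS
      exact (csInf_le (hbdd G _) ⟨S', hS', rfl⟩).trans hle
  constructor
  · ext A
    simp only [Set.mem_inter_iff, Set.mem_setOf_eq]
    constructor
    · rintro ⟨⟨hACl, hmin⟩, hAO⟩
      exact ⟨hAO, by rw [← hinf_eq]; exact hmin⟩
    · rintro ⟨hAO, hmin⟩
      exact ⟨⟨hsub hAO, by rw [hinf_eq]; exact hmin⟩, hAO⟩
  · set c : ℝ := ∑ i, ‖F i - G i‖ ^ 2 with hc_def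
    have hsplit : ∀ A ∈ ClOmega Λ ℓ V, err F A = err G A + c := by
      intro A hA
      haveI : Submodule.HasOrthogonalProjection A :=
        ArgminAux.hasProj_of_isClosed (ArgminAux.isClosed_of_mem_Cl hA.1)
      have hAV : A ≤ V := fun x hx => hA.2 hx
      exact ArgminAux.err_split F V A hAV
    have himg : err F '' ClOmega Λ ℓ V = (fun A => err G A + c) '' ClOmega Λ ℓ V :=
      Set.image_congr hsplit
    have hsInf : sInf (err F '' ClOmega Λ ℓ V) = sInf (err G '' ClOmega Λ ℓ V) + c := by
      rw [himg]
      exact ArgminAux.sInf_image_add_const _ hClO_ne _ (hbdd G _) c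
    ext A
    simp only [Set.mem_setOf_eq]
    constructor
    · rintro ⟨hAO, hmin⟩
      refine ⟨hAO, ?_⟩
      rw [hsplit A hAO, hmin, hsInf]
    · rintro ⟨hAO, hmin⟩
      refine ⟨hAO, ?_⟩
      have h2 := hsplit A hAO
      rw [h2, hsInf] at hmin
      linarith
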